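/- arXiv:2501.13626 — 7 statements merged into one kernel-verified Lean document; each statement's English description precedes it below -/
import Mathlib

section
/- Let (a_n) be an arithmetic sequence and let A ⊆ ℕ be a b-bounded set with natural density d(A) = 0. Then d(L(A)) = 0. -/
open Filter Topology Set

noncomputable section

/-- The sequence of ratios `b n = a n / a (n-1)` of an arithmetic sequence. -/
def ratios (a : ℕ → ℕ) (n : ℕ) : ℕ := a n / a (n - 1)

/-- An arithmetic sequence: `a 0 = 1`, strictly increasing, each term divides the next. -/
def IsArithSeq (a : ℕ → ℕ) : Prop :=
  a 0 = 1 ∧ (∀ n, a n < a (n + 1)) ∧ (∀ n, a n ∣ a (n + 1))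

/-- The indices `n_k` with `a k = d (n k)`: `n 0 = 1`, `n (k+1) = n k + (b (k+1) - 1)`. -/
def nseq (a : ℕ → ℕ) : ℕ → ℕ
  | 0 => 1
  | k + 1 => nseq a k + (ratios a (k + 1) - 1)

/-- The lifting function `L(A) = ⋃_{k ∈ A} [n_{k-1}, n_k - 1]`. -/
def liftSet (a : ℕ → ℕ) (A : Set ℕ) : Set ℕ :=
  ⋃ k ∈ A, Set.Icc (nseq a (k - 1)) (nseq a k - 1)

/-- `A ⊆ ℕ` has natural density `δ`. -/
def HasDensity (A : Set ℕ) (δ : ℝ) : Prop :=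
  Tendsto (fun n : ℕ => ((A ∩ Set.Iio n).ncard : ℝ) / n) atTop (𝓝 δ)

/-- The upper natural density of `A ⊆ ℕ`. -/
def upperDensity (A : Set ℕ) : ℝ :=
  limsup (fun n : ℕ => ((A ∩ Set.Iio n).ncard : ℝ) / n) atTop

/-- The sequence `(d n)`: the increasing enumeration of `{r * a k : k ≥ 0, 1 ≤ r < b (k+1)}`. -/
def dSeq (a : ℕ → ℕ) : ℕ → ℕ :=
  Nat.nth (fun m => ∃ k r : ℕ, 1 ≤ r ∧ r < ratios a (k + 1) ∧ m = r * a k)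

/-- The characterized subgroup `t_{(u n)}(𝕋)`. -/
def charSub (u : ℕ → ℤ) : Set (AddCircle (1 : ℝ)) :=
  {x | Tendsto (fun n => u n • x) atTop (𝓝 0)}

/-- The statistically characterized subgroup `t^s_{(u n)}(𝕋)`. -/
def statChar (u : ℕ → ℤ) : Set (AddCircle (1 : ℝ)) :=
  {x | ∀ ε : ℝ, 0 < ε → HasDensity {n : ℕ | ε ≤ ‖u n • x‖} 0}

/-- Density lifting invariant. -/
def Dli (a : ℕ → ℕ) : Prop :=
  ∀ A : Set ℕ, A.Infinite → HasDensity A 0 → HasDensity (liftSet a A) 0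

/-- Weakly density lifting invariant. -/
def WeaklyDli (a : ℕ → ℕ) : Prop :=
  ∃ A : Set ℕ, A.Infinite ∧ ∀ m : ℕ, HasDensity (liftSet a ((fun x => x - m) '' A)) 0

/-- Strongly non density lifting invariant. -/
def StronglyNonDli (a : ℕ → ℕ) : Prop :=
  ∀ A : Set ℕ, A.Infinite → 0 < upperDensity (liftSet a A)

lemma apos_of_arith (a : ℕ → ℕ) (ha : IsArithSeq a) : ∀ n, 0 < a n := by
  intro n
  induction n with
  | zero => simp [ha.1]
  | succ n ih => exact ih.trans (ha.2.1 n)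

lemma ratios_ge_two (a : ℕ → ℕ) (ha : IsArithSeq a) (k : ℕ) : 2 ≤ ratios a (k + 1) := by
  obtain ⟨c, hc⟩ := ha.2.2 k
  have hlt := ha.2.1 k
  have hp := apos_of_arith a ha k
  have hc2 : 2 ≤ c := by
    rcases c with _ | _ | c
    · omega
    · omega
    · omega
  unfold ratios
  simp only [Nat.add_sub_cancel]
  rw [Nat.le_div_iff_mul_le hp]
  calc 2 * a k = a k * 2 := by ring
    _ ≤ a k * c := Nat.mul_le_mul_left _ hc2
    _ = a (k + 1) := hc.symm

lemma nseq_ge (a : ℕ → ℕ) (ha : IsArithSeq a) (k : ℕ) : k + 1 ≤ nseq a k := by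
  induction k with
  | zero => simp [nseq]
  | succ k ih =>
    have := ratios_ge_two a ha k
    simp only [nseq]
    omega

lemma count_bound (a : ℕ → ℕ) (ha : IsArithSeq a) (A : Set ℕ) (M : ℕ)
    (hM : ∀ n ∈ A, ratios a n ≤ M) (N : ℕ) :
    (liftSet a A ∩ Set.Iio N).ncard ≤ M * (A ∩ Set.Iio N).ncard := by
  classical
  have hFfin : (A ∩ Set.Iio N).Finite := (Set.finite_Iio N).inter_of_right A
  set FS : Finset ℕ := hFfin.toFinset with hFS
  set T : Finset ℕ := FS.biUnion (fun k => Finset.Icc (nseq a (k - 1)) (nseq a k - 1)) with hT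
  have hsub : liftSet a A ∩ Set.Iio N ⊆ ↑T := by
    rintro m ⟨hm, hmN⟩
    simp only [liftSet, Set.mem_iUnion, Set.mem_Icc] at hm
    obtain ⟨k, hkA, h1, h2⟩ := hm
    have hkle : k ≤ nseq a (k - 1) := by
      rcases k with _ | j
      · simp
      · have := nseq_ge a ha j
        simpa using this
    have hkN : k < N := by
      simp only [Set.mem_Iio] at hmN
      omega
    simp only [hT, Finset.coe_biUnion, Set.mem_iUnion, Finset.mem_coe, Finset.mem_Icc]
    refine ⟨k, ?_, h1, h2⟩
    simp [hFS, hFfin.mem_toFinset, hkA, hkN]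
  have hcard1 : (liftSet a A ∩ Set.Iio N).ncard ≤ T.card := by
    have := Set.ncard_le_ncard hsub T.finite_toSet
    simpa [Set.ncard_coe_finset] using this
  have hcard2 : T.card ≤ M * FS.card := by
    calc T.card ≤ ∑ k ∈ FS, (Finset.Icc (nseq a (k - 1)) (nseq a k - 1)).card :=
          Finset.card_biUnion_le
      _ ≤ ∑ _k ∈ FS, M := by
          apply Finset.sum_le_sum
          intro k hk
          have hkA : k ∈ A := by
            have := (hFfin.mem_toFinset.mp hk).1
            exact this
          rw [Nat.card_Icc]
          rcases k with _ | j
          · simp [nseq]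
          · have hbM := hM (j + 1) hkA
            have hb2 := ratios_ge_two a ha j
            have hn := nseq_ge a ha j
            simp only [Nat.add_sub_cancel, nseq]
            omega
      _ = M * FS.card := by rw [Finset.sum_const, smul_eq_mul, mul_comm]
  have hcard3 : FS.card = (A ∩ Set.Iio N).ncard := by
    rw [hFS, Set.ncard_eq_toFinset_card _ hFfin]
  calc (liftSet a A ∩ Set.Iio N).ncard ≤ T.card := hcard1
    _ ≤ M * FS.card := hcard2
    _ = M * (A ∩ Set.Iio N).ncard := by rw [hcard3]

/-- for a b-bounded set `A` with density zero, `L(A)` has density zero. -/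
theorem density_lift_of_bBounded (a : ℕ → ℕ) (ha : IsArithSeq a) (A : Set ℕ)
    (hA : ∃ M : ℕ, ∀ n ∈ A, ratios a n ≤ M) (hd : HasDensity A 0) :
    HasDensity (liftSet a A) 0 := by
  obtain ⟨M, hM⟩ := hA
  unfold HasDensity at hd ⊢
  have hg : Tendsto (fun n : ℕ => (M : ℝ) * (((A ∩ Set.Iio n).ncard : ℝ) / n)) atTop (𝓝 0) := by
    have := hd.const_mul (M : ℝ)
    simpa using this
  apply squeeze_zero (fun n => by positivity) _ hg
  intro n
  rcases Nat.eq_zero_or_pos n with hn | hn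
  · simp [hn]
  · rw [← mul_div_assoc]
    apply div_le_div_of_nonneg_right ?_ (by positivity)
    have := count_bound a ha A M hM n
    exact_mod_cast this
end
end

section
/- Every b-bounded arithmetic sequence is density lifting invariant (dli). -/
open Filter Topology Set

noncomputable section

/-- every b-bounded arithmetic sequence is dli. -/
theorem bBounded_implies_dli (a : ℕ → ℕ) (ha : IsArithSeq a)
    (hb : ∃ M : ℕ, ∀ n, ratios a n ≤ M) : Dli a := by
  classical
  obtain ⟨M, hM⟩ := hb
  obtain ⟨h0, hlt, hdvd⟩ := ha
  intro A _hAinf hA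
  have hapos : ∀ k, 0 < a k := by
    intro k
    induction k with
    | zero => simp [h0]
    | succ n ih => exact ih.trans (hlt n)
  have hr2 : ∀ k, 2 ≤ ratios a (k + 1) := by
    intro k
    obtain ⟨c, hc⟩ := hdvd k
    have hcval : ratios a (k + 1) = c := by
      simp only [ratios, Nat.add_sub_cancel]
      rw [hc, Nat.mul_div_cancel_left _ (hapos k)]
    have h1c : 1 < c := by
      have h := hlt k
      rw [hc] at h
      by_contra hcon
      push_neg at hcon
      interval_cases c <;> omega
    omega
  have hnseq_ge : ∀ k, k + 1 ≤ nseq a k := by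
    intro k
    induction k with
    | zero => simp [nseq]
    | succ j ih =>
      have := hr2 j
      simp only [nseq]
      omega
  have hnseq_pos : ∀ k, 1 ≤ nseq a k := fun k => le_trans (by omega) (hnseq_ge k)
  have key : ∀ n : ℕ, (liftSet a A ∩ Set.Iio n).ncard ≤ M * (A ∩ Set.Iio n).ncard := by
    intro n
    set s : Finset ℕ := (Finset.range n).filter (· ∈ liftSet a A) with hs
    set t : Finset ℕ := (Finset.range n).filter (· ∈ A) with ht
    have hseq : liftSet a A ∩ Set.Iio n = ↑s := by
      ext m
      simp [hs, Finset.mem_filter, Finset.mem_range, and_comm, Set.mem_Iio]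
    have hteq : A ∩ Set.Iio n = ↑t := by
      ext m
      simp [ht, Finset.mem_filter, Finset.mem_range, and_comm, Set.mem_Iio]
    rw [hseq, hteq, Set.ncard_coe_finset, Set.ncard_coe_finset]
    have hmemL : ∀ m : ℕ, m ∈ liftSet a A ↔
        ∃ k, k ∈ A ∧ m ∈ Set.Icc (nseq a (k - 1)) (nseq a k - 1) := by
      intro m
      simp only [liftSet, Set.mem_iUnion, Set.mem_Icc, exists_prop]
    set f : ℕ → ℕ := fun m =>
      if h : ∃ k, k ∈ A ∧ m ∈ Set.Icc (nseq a (k - 1)) (nseq a k - 1) then h.choose else 0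
      with hf
    have hfP : ∀ m ∈ s, f m ∈ A ∧ m ∈ Set.Icc (nseq a (f m - 1)) (nseq a (f m) - 1) := by
      intro m hm
      rw [hs, Finset.mem_filter] at hm
      have h := (hmemL m).mp hm.2
      simp only [hf, dif_pos h]
      exact h.choose_spec
    have hmaps : ∀ m ∈ s, f m ∈ t := by
      intro m hm
      obtain ⟨hfA, hfI⟩ := hfP m hm
      have hmn : m < n := by
        rw [hs, Finset.mem_filter, Finset.mem_range] at hm
        exact hm.1
      rw [ht, Finset.mem_filter, Finset.mem_range]
      refine ⟨?_, hfA⟩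
      rcases Nat.eq_zero_or_pos (f m) with h0' | hpos
      · rw [h0'] at hfI
        simp only [Set.mem_Icc, nseq] at hfI
        omega
      · have h1 : f m ≤ nseq a (f m - 1) := by
          have := hnseq_ge (f m - 1)
          omega
        have := hfI.1
        omega
    have hfiber : ∀ b ∈ t, (s.filter fun x => f x = b).card ≤ M := by
      intro b _hb
      have hsub : (s.filter fun x => f x = b) ⊆
          Finset.Icc (nseq a (b - 1)) (nseq a b - 1) := by
        intro x hx
        rw [Finset.mem_filter] at hx
        obtain ⟨_, hxI⟩ := hfP x hx.1
        rw [hx.2] at hxI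
        rw [Finset.mem_Icc]
        exact ⟨hxI.1, hxI.2⟩
      refine le_trans (Finset.card_le_card hsub) ?_
      rw [Nat.card_Icc]
      rcases Nat.eq_zero_or_pos b with rfl | hbpos
      · simp [nseq]
      · obtain ⟨j, rfl⟩ : ∃ j, b = j + 1 := ⟨b - 1, by omega⟩
        have h1 : nseq a (j + 1) = nseq a j + (ratios a (j + 1) - 1) := rfl
        have h2 := hM (j + 1)
        have h3 := hr2 j
        have h4 := hnseq_pos (j + 1)
        simp only [Nat.add_sub_cancel]
        omega
    exact Finset.card_le_mul_card_image_of_maps_to hmaps M hfiber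
  have hbound : ∀ n : ℕ, ((liftSet a A ∩ Set.Iio n).ncard : ℝ) / n ≤
      (M : ℝ) * (((A ∩ Set.Iio n).ncard : ℝ) / n) := by
    intro n
    rw [div_eq_mul_inv, mul_div_assoc', div_eq_mul_inv]
    refine mul_le_mul_of_nonneg_right ?_ (by positivity)
    calc ((liftSet a A ∩ Set.Iio n).ncard : ℝ) ≤ (M * (A ∩ Set.Iio n).ncard : ℕ) := by
          exact_mod_cast key n
      _ = (M : ℝ) * (A ∩ Set.Iio n).ncard := by push_cast; ring
  have hRHS : Tendsto (fun n : ℕ => (M : ℝ) * (((A ∩ Set.Iio n).ncard : ℝ) / n))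
      atTop (𝓝 0) := by
    simpa using hA.const_mul (M : ℝ)
  exact squeeze_zero (fun n => by positivity) hbound hRHS
end
end

section
/- There exists an arithmetic sequence (a_n) that is density lifting invariant (dli) but not b-bounded. -/
/-!
Take `a n = (2n)‼ = 2ⁿ n!`, whose ratios `b n = 2n` are unbounded. Then `n_k = k² + 1`, so
`L(A)` is the union of the blocks `((k-1)², k²]` for `k ∈ A`. Below `N` only blocks with
`k ≤ √N + 1` occur, each of size at most `2(√N + 1)`, hence
`|L(A) ∩ [0, N)| ≤ 2(√N + 1) |A ∩ [0, √N + 2)|`, which is `o(N)` as soon as `A` has density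
zero.
-/

open Filter Topology Set

noncomputable section

open scoped Nat

def squareLift (A : Set ℕ) : Set ℕ :=
  ⋃ k ∈ A, Icc ((k - 1) ^ 2 + 1) (k ^ 2)

lemma ncard_squareLift_inter_Iio_le (A : Set ℕ) (n : ℕ) :
    (squareLift A ∩ Iio n).ncard ≤ 2 * (n.sqrt + 1) * (A ∩ Iio (n.sqrt + 2)).ncard := by
  classical
  set T := (Finset.range (n.sqrt + 2)).filter (· ∈ A)
  have hsub : squareLift A ∩ Iio n ⊆
      ↑(T.biUnion fun k => Finset.Icc ((k - 1) ^ 2 + 1) (k ^ 2)) := by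
    rintro m ⟨hm, hmn : m < n⟩
    simp only [squareLift, mem_iUnion, mem_Icc] at hm
    obtain ⟨k, hkA, hlo, hhi⟩ := hm
    have hk : k - 1 ≤ n.sqrt := Nat.le_sqrt'.mpr (by omega)
    simp only [Finset.coe_biUnion, mem_iUnion, Finset.mem_coe, Finset.mem_Icc]
    exact ⟨k, by simp [T, hkA]; omega, hlo, hhi⟩
  have hT : (A ∩ Iio (n.sqrt + 2)).ncard = T.card := by
    rw [← ncard_coe_finset]
    congr 1
    ext
    simp [T, and_comm]
  calc (squareLift A ∩ Iio n).ncard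
      ≤ (T.biUnion fun k => Finset.Icc ((k - 1) ^ 2 + 1) (k ^ 2)).card := by
        rw [← ncard_coe_finset]
        exact ncard_le_ncard hsub (Finset.finite_toSet _)
    _ ≤ T.card * (2 * (n.sqrt + 1)) := by
        refine Finset.card_biUnion_le_card_mul _ _ _ fun k hk => ?_
        have hk : k < n.sqrt + 2 := by simpa [T] using (Finset.mem_filter.mp hk).1
        rw [Nat.card_Icc]
        rcases k with _ | j
        · simp
        · rw [Nat.add_sub_cancel]
          ring_nf
          omega
    _ = 2 * (n.sqrt + 1) * (A ∩ Iio (n.sqrt + 2)).ncard := by rw [hT, mul_comm]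

lemma HasDensity.squareLift_zero {A : Set ℕ} (hA : HasDensity A 0) :
    HasDensity (squareLift A) 0 := by
  have hsqrt : Tendsto (fun n : ℕ => n.sqrt + 2) atTop atTop :=
    tendsto_atTop_atTop.mpr fun b => ⟨b * b, fun n hn => (Nat.le_sqrt.mpr hn).trans (by omega)⟩
  have hmaj : Tendsto (fun n : ℕ =>
      12 * (((A ∩ Iio (n.sqrt + 2)).ncard : ℝ) / (n.sqrt + 2 : ℕ))) atTop (𝓝 0) := by
    simpa using (hA.comp hsqrt).const_mul 12
  refine squeeze_zero' (Eventually.of_forall fun n => by positivity) ?_ hmaj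
  filter_upwards [eventually_ge_atTop 1] with n hn
  have hcount : ((squareLift A ∩ Iio n).ncard : ℝ) ≤
      2 * ((n.sqrt : ℝ) + 1) * (A ∩ Iio (n.sqrt + 2)).ncard := by
    exact_mod_cast ncard_squareLift_inter_Iio_le A n
  set s := n.sqrt
  set c : ℝ := ((A ∩ Iio (s + 2)).ncard : ℝ)
  have hs : (1 : ℝ) ≤ s := by exact_mod_cast Nat.le_sqrt.mpr hn
  have hsn : (s : ℝ) * s ≤ n := by exact_mod_cast Nat.sqrt_le n
  have hn_pos : (0 : ℝ) < n := by exact_mod_cast hn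
  have hc : 0 ≤ c := by positivity
  have hquad : 2 * ((s : ℝ) + 1) * (s + 2) ≤ 12 * n := by nlinarith
  rw [mul_div_assoc', div_le_div_iff₀ hn_pos (by push_cast; positivity)]
  push_cast
  nlinarith [mul_le_mul_of_nonneg_left hquad hc]

lemma doubleFactorial_two_mul_succ (n : ℕ) : (2 * (n + 1))‼ = 2 * (n + 1) * (2 * n)‼ := by
  rw [mul_add, mul_one, Nat.doubleFactorial_add_two]

lemma isArithSeq_doubleFactorial_two_mul : IsArithSeq fun n => (2 * n)‼ := by
  refine ⟨rfl, fun n => ?_, fun n => ⟨2 * (n + 1), ?_⟩⟩ <;> dsimp only <;>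
    rw [doubleFactorial_two_mul_succ]
  · nlinarith [Nat.doubleFactorial_pos (2 * n)]
  · rw [mul_comm]

lemma ratios_doubleFactorial_two_mul (n : ℕ) :
    ratios (fun n => (2 * n)‼) (n + 1) = 2 * (n + 1) := by
  simp only [ratios, Nat.add_sub_cancel, doubleFactorial_two_mul_succ]
  exact Nat.mul_div_cancel _ (Nat.doubleFactorial_pos _)

lemma nseq_doubleFactorial_two_mul (k : ℕ) : nseq (fun n => (2 * n)‼) k = k ^ 2 + 1 := by
  induction k with
  | zero => rfl
  | succ k ih =>
    rw [nseq, ih, ratios_doubleFactorial_two_mul]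
    ring_nf
    omega

lemma liftSet_doubleFactorial_two_mul (A : Set ℕ) :
    liftSet (fun n => (2 * n)‼) A = squareLift A := by
  simp [liftSet, squareLift, nseq_doubleFactorial_two_mul]

/-- there is a dli arithmetic sequence that is not b-bounded. -/
theorem exists_dli_not_bBounded :
    ∃ a : ℕ → ℕ, IsArithSeq a ∧ Dli a ∧ ¬ ∃ M : ℕ, ∀ n, ratios a n ≤ M := by
  refine ⟨fun n => (2 * n)‼, isArithSeq_doubleFactorial_two_mul, fun A _ hA => ?_, ?_⟩
  · rw [liftSet_doubleFactorial_two_mul]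
    exact hA.squareLift_zero
  · rintro ⟨M, hM⟩
    have := hM (M + 1)
    rw [ratios_doubleFactorial_two_mul] at this
    omega
end
end

section
/- Let (a_n) be an arithmetic sequence such that lim_{n→∞} b_n / (Σ_{i=1}^n (b_i - 1)) = 0. Then (a_n) is weakly density lifting invariant (weakly dli). -/
open Filter Topology Set

noncomputable section

/-!
Take `A = {g₀ < g₁ < …}` so sparse that the block `[n_{g_{j+1}-m-1}, n_{g_{j+1}-m} - 1]` of
`L(A - m)` starts far beyond `j + 1` times the end `n_{g_j}` of everything lifted before it.
For `x` in that block, `L(A - m) ∩ [0, x]` then consists of the earlier part, of size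
`o(n_{g_{j+1}-m-1})`, and part of one block of length `b_{g_{j+1}-m} - 1`, which is also
`o(n_{g_{j+1}-m-1})` by the hypothesis. So the counting function of `L(A - m)` is `o(x)` at its
own points, which forces density zero.
-/

open Asymptotics

theorem hasDensity_zero_of_ncard_inter_Iic_le {S : Set ℕ}
    (hS : ∀ ε > 0, ∃ C : ℝ, ∀ x ∈ S, ((S ∩ Iic x).ncard : ℝ) ≤ ε * x + C) :
    HasDensity S 0 := by
  refine tendsto_order.2 ⟨fun δ hδ => Eventually.of_forall fun n => hδ.trans_le (by positivity),
    fun ε hε => ?_⟩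
  obtain ⟨C, hC⟩ := hS (ε / 2) (half_pos hε)
  have hcount : ∀ n : ℕ, ((S ∩ Iio n).ncard : ℝ) ≤ ε / 2 * n + max C 0 := by
    intro n
    rcases (S ∩ Iio n).eq_empty_or_nonempty with hempty | hne
    · rw [hempty, ncard_empty, Nat.cast_zero]
      positivity
    obtain ⟨x, ⟨hxS, hxn : x < n⟩, hmax⟩ :=
      exists_max_image _ id ((finite_Iio n).subset inter_subset_right) hne
    calc ((S ∩ Iio n).ncard : ℝ) ≤ (S ∩ Iic x).ncard := by
          have hsub : S ∩ Iio n ⊆ S ∩ Iic x := fun y hy => ⟨hy.1, hmax y hy⟩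
          exact_mod_cast ncard_le_ncard hsub ((finite_Iic x).subset inter_subset_right)
      _ ≤ ε / 2 * x + C := hC x hxS
      _ ≤ ε / 2 * n + max C 0 := by gcongr; exact le_max_left C 0
  filter_upwards [tendsto_natCast_atTop_atTop.eventually_gt_atTop (2 * max C 0 / ε)] with n hn
  have hn₀ : (0 : ℝ) < n := lt_of_le_of_lt (by positivity) hn
  rw [div_lt_iff₀ hn₀]
  linarith [hcount n, (div_lt_iff₀ hε).1 hn]

section Lifting

variable {a : ℕ → ℕ}

theorem nseq_monotone : Monotone (nseq a) :=
  monotone_nat_of_le_succ fun _ => Nat.le_add_right _ _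

theorem one_le_nseq (k : ℕ) : 1 ≤ nseq a k :=
  nseq_monotone (Nat.zero_le k)

theorem nseq_le_nseq_pred_add_ratios (k : ℕ) : nseq a k ≤ nseq a (k - 1) + ratios a k := by
  cases k with
  | zero => exact Nat.le_add_right _ _
  | succ k => simp only [nseq, Nat.add_sub_cancel]; omega

theorem ncard_liftSet_inter_Iic_le {K : Set ℕ} {k p x : ℕ} (hp : ∀ k' ∈ K, k' < k → k' ≤ p)
    (hx : x ∈ Icc (nseq a (k - 1)) (nseq a k - 1)) :
    (liftSet a K ∩ Iic x).ncard ≤ nseq a p + ratios a k := by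
  have hsub : liftSet a K ∩ Iic x ⊆ Iio (nseq a p) ∪ Icc (nseq a (k - 1)) x := by
    rintro y ⟨hy, hyx : y ≤ x⟩
    simp only [liftSet, mem_iUnion, mem_Icc, exists_prop] at hy
    obtain ⟨k', hk'K, hy₁, hy₂⟩ := hy
    rcases lt_trichotomy k' k with hlt | rfl | hgt
    · have := nseq_monotone (a := a) (hp k' hk'K hlt)
      have := one_le_nseq (a := a) k'
      exact Or.inl (by simp only [mem_Iio]; omega)
    · exact Or.inr ⟨hy₁, hyx⟩
    · have := nseq_monotone (a := a) (Nat.le_sub_one_of_lt hgt)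
      have := one_le_nseq (a := a) k
      have := hx.2
      omega
  calc (liftSet a K ∩ Iic x).ncard
      ≤ (Iio (nseq a p) ∪ Icc (nseq a (k - 1)) x).ncard :=
        ncard_le_ncard hsub ((finite_Iio _).union (finite_Icc _ _))
    _ ≤ nseq a p + (x + 1 - nseq a (k - 1)) := by
        simpa using ncard_union_le (Iio (nseq a p)) (Icc (nseq a (k - 1)) x)
    _ ≤ nseq a p + ratios a k := by
        have := nseq_le_nseq_pred_add_ratios (a := a) k
        have := hx.2
        have := one_le_nseq (a := a) k
        omega

theorem hasDensity_liftSet_range_zero {c : ℕ → ℕ} (hc : Monotone c)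
    (hgap : (fun j => (nseq a (c j) : ℝ)) =o[atTop] fun j => (nseq a (c (j + 1) - 1) : ℝ))
    (hlen : (fun j => (ratios a (c j) : ℝ)) =o[atTop] fun j => (nseq a (c j - 1) : ℝ)) :
    HasDensity (liftSet a (range c)) 0 := by
  refine hasDensity_zero_of_ncard_inter_Iic_le fun ε hε => ?_
  obtain ⟨J, hJ⟩ := eventually_atTop.1 ((hgap.bound (half_pos hε)).and (hlen.bound (half_pos hε)))
  refine ⟨nseq a (c J), fun x hx => ?_⟩
  obtain ⟨_, ⟨i, rfl⟩, hxi⟩ : ∃ k ∈ range c, x ∈ Icc (nseq a (k - 1)) (nseq a k - 1) := by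
    simpa only [liftSet, mem_iUnion, exists_prop] using hx
  rcases le_or_gt i J with hiJ | hJi
  · have hxJ : x + 1 ≤ nseq a (c J) := by
      have := nseq_monotone (a := a) (hc hiJ)
      have := one_le_nseq (a := a) (c i)
      have := hxi.2
      omega
    have hcount : ((liftSet a (range c) ∩ Iic x).ncard : ℝ) ≤ nseq a (c J) := by
      exact_mod_cast (ncard_le_ncard inter_subset_right (finite_Iic x)).trans (by simpa using hxJ)
    linarith [mul_nonneg hε.le (Nat.cast_nonneg (α := ℝ) x)]
  · obtain ⟨j, rfl⟩ : ∃ j, i = j + 1 := ⟨i - 1, by omega⟩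
    have hp : ∀ k ∈ range c, k < c (j + 1) → k ≤ c j := by
      rintro _ ⟨i', rfl⟩ hlt
      exact hc (not_lt.1 fun hji' => hlt.not_ge (hc hji'))
    have hgapj := (hJ j (by omega)).1
    have hlenj := (hJ (j + 1) hJi.le).2
    rw [Real.norm_natCast, Real.norm_natCast] at hgapj hlenj
    have hsx : (nseq a (c (j + 1) - 1) : ℝ) ≤ x := by exact_mod_cast hxi.1
    calc ((liftSet a (range c) ∩ Iic x).ncard : ℝ) ≤ nseq a (c j) + ratios a (c (j + 1)) := by
          exact_mod_cast ncard_liftSet_inter_Iic_le hp hxi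
      _ ≤ ε * nseq a (c (j + 1) - 1) := by linarith
      _ ≤ ε * x + nseq a (c J) :=
          (mul_le_mul_of_nonneg_left hsx hε.le).trans (le_add_of_nonneg_right (Nat.cast_nonneg _))

end Lifting

namespace IsArithSeq

variable {a : ℕ → ℕ}

theorem two_le_ratios_succ (ha : IsArithSeq a) (n : ℕ) : 2 ≤ ratios a (n + 1) := by
  obtain ⟨q, hq⟩ := ha.2.2 n
  have hpos : 0 < a n := by
    have := (strictMono_nat_of_lt_succ ha.2.1).monotone (Nat.zero_le n)
    rwa [ha.1] at this
  have hlt := ha.2.1 n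
  rw [hq] at hlt
  rw [ratios, Nat.add_sub_cancel, hq, Nat.mul_div_cancel_left q hpos]
  by_contra! hq2
  interval_cases q <;> simp at hlt

theorem lt_nseq (ha : IsArithSeq a) (k : ℕ) : k < nseq a k := by
  induction k with
  | zero => simp [nseq]
  | succ k ih => have := ha.two_le_ratios_succ k; simp only [nseq]; omega

theorem nseq_cast_eq (ha : IsArithSeq a) (k : ℕ) :
    (nseq a k : ℝ) = 1 + ∑ i ∈ Finset.Icc 1 k, ((ratios a i : ℝ) - 1) := by
  induction k with
  | zero => simp [nseq]
  | succ k ih =>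
    rw [Finset.sum_Icc_succ_top (by omega), ← add_assoc, ← ih, nseq,
      Nat.cast_add, Nat.cast_sub (by linarith [ha.two_le_ratios_succ k]), Nat.cast_one]

theorem isLittleO_ratios_nseq_pred (ha : IsArithSeq a)
    (h : Tendsto
        (fun n : ℕ => (ratios a n : ℝ) / ∑ i ∈ Finset.Icc 1 n, ((ratios a i : ℝ) - 1))
        atTop (𝓝 0)) :
    (fun n => (ratios a n : ℝ)) =o[atTop] fun n => (nseq a (n - 1) : ℝ) := by
  have hsum : ∀ᶠ n in atTop, ∑ i ∈ Finset.Icc 1 n, ((ratios a i : ℝ) - 1)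
      = nseq a (n - 1) + ratios a n - 2 := by
    filter_upwards [eventually_ge_atTop 1] with n hn
    obtain ⟨n, rfl⟩ : ∃ k, n = k + 1 := ⟨n - 1, by omega⟩
    rw [Finset.sum_Icc_succ_top (by omega), ← add_sub_cancel_left 1 (∑ i ∈ _, _),
      ← ha.nseq_cast_eq, Nat.add_sub_cancel]
    ring
  have hlow : ∀ᶠ n in atTop, (1 : ℝ) ≤ nseq a (n - 1) ∧ (2 : ℝ) ≤ ratios a n := by
    filter_upwards [eventually_ge_atTop 1] with n hn
    obtain ⟨n, rfl⟩ : ∃ k, n = k + 1 := ⟨n - 1, by omega⟩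
    exact ⟨by exact_mod_cast one_le_nseq _, by exact_mod_cast ha.two_le_ratios_succ n⟩
  have hsum_ne_zero : ∀ᶠ n in atTop, ∑ i ∈ Finset.Icc 1 n, ((ratios a i : ℝ) - 1) = 0 →
      (ratios a n : ℝ) = 0 := by
    filter_upwards [hsum, hlow] with n hn ⟨h₁, h₂⟩ h0
    linarith
  -- the sum is `n_{n-1} + b_n - 2`, so `b_n = o(n_{n-1} + b_n)`, which forces `b_n = o(n_{n-1})`
  have hadd : (fun n => (ratios a n : ℝ)) =o[atTop]
      fun n => (nseq a (n - 1) : ℝ) + ratios a n := by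
    refine ((isLittleO_iff_tendsto' hsum_ne_zero).2 h).trans_isBigO (IsBigO.of_bound' ?_)
    filter_upwards [hsum, hlow] with n hn ⟨h₁, h₂⟩
    rw [hn, Real.norm_of_nonneg (by linarith), Real.norm_of_nonneg (by linarith)]
    linarith
  simpa using hadd.trans_isBigO hadd.right_isBigO_sub

end IsArithSeq

/-- `sparseSeq a (j + 1) - (j + 1) ≥ (j + 1) * nseq a (sparseSeq a j)`, so after any fixed shift
`m ≤ j` the next lifted block starts beyond `j + 1` times the end of the previous ones. -/
def sparseSeq (a : ℕ → ℕ) : ℕ → ℕ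
  | 0 => 0
  | j + 1 => sparseSeq a j + (j + 1) * (nseq a (sparseSeq a j) + 1)

theorem sparseSeq_strictMono (a : ℕ → ℕ) : StrictMono (sparseSeq a) :=
  strictMono_nat_of_lt_succ fun j => by
    simp only [sparseSeq]
    nlinarith

theorem IsArithSeq.isLittleO_nseq_sparseSeq {a : ℕ → ℕ} (ha : IsArithSeq a) (m : ℕ) :
    (fun j => (nseq a (sparseSeq a j - m) : ℝ)) =o[atTop]
      fun j => (nseq a (sparseSeq a (j + 1) - m - 1) : ℝ) := by
  refine IsLittleO.of_bound fun ε hε => ?_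
  filter_upwards [eventually_ge_atTop m,
    tendsto_natCast_atTop_atTop.eventually_ge_atTop ε⁻¹] with j hjm hjε
  have hgrowth : (j + 1) * nseq a (sparseSeq a j) ≤ nseq a (sparseSeq a (j + 1) - m - 1) := by
    have hlt := ha.lt_nseq (sparseSeq a (j + 1) - m - 1)
    have hsucc : sparseSeq a (j + 1)
        = sparseSeq a j + ((j + 1) * nseq a (sparseSeq a j) + (j + 1)) := by
      rw [sparseSeq, Nat.mul_succ]
    rw [hsucc] at hlt ⊢
    generalize (j + 1) * nseq a (sparseSeq a j) = P at hlt ⊢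
    omega
  have hle : (nseq a (sparseSeq a j - m) : ℝ) ≤ nseq a (sparseSeq a j) := by
    exact_mod_cast nseq_monotone (Nat.sub_le _ _)
  have hεj : 1 ≤ ε * (j + 1) := by
    rw [inv_le_iff_one_le_mul₀ hε] at hjε
    linarith
  rw [Real.norm_natCast, Real.norm_natCast]
  calc (nseq a (sparseSeq a j - m) : ℝ) ≤ ε * ((j + 1) * nseq a (sparseSeq a j)) := by
        rw [← mul_assoc]
        nlinarith [(Nat.cast_nonneg (nseq a (sparseSeq a j)) : (0 : ℝ) ≤ _)]
    _ ≤ ε * nseq a (sparseSeq a (j + 1) - m - 1) := by gcongr; exact_mod_cast hgrowth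

/-- if `b n / Σ_{i=1}^n (b i - 1) → 0` then `(a n)` is weakly dli. -/
theorem weaklyDli_of_ratio_limit (a : ℕ → ℕ) (ha : IsArithSeq a)
    (h : Tendsto
        (fun n : ℕ => (ratios a n : ℝ) / ∑ i ∈ Finset.Icc 1 n, ((ratios a i : ℝ) - 1))
        atTop (𝓝 0)) :
    WeaklyDli a := by
  refine ⟨range (sparseSeq a), infinite_range_of_injective (sparseSeq_strictMono a).injective,
    fun m => ?_⟩
  have hshift : Tendsto (fun j => sparseSeq a j - m) atTop atTop :=
    (tendsto_sub_atTop_nat m).comp (sparseSeq_strictMono a).tendsto_atTop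
  rw [← range_comp]
  exact hasDensity_liftSet_range_zero
    (fun i j hij => Nat.sub_le_sub_right ((sparseSeq_strictMono a).monotone hij) m)
    (ha.isLittleO_nseq_sparseSeq m)
    ((ha.isLittleO_ratios_nseq_pred h).comp_tendsto hshift)
end
end

section
/- If (a_n) is a weakly density lifting invariant (weakly dli) arithmetic sequence, then the statistically characterized subgroup t^s_{(d_n)}(T) has cardinality of the continuum. -/
/-!
Let `A` witness that `a` is weakly dli and let `c j` run through every other element of `A`,
so that `a (c (j + 1)) ≥ 4 a (c j)`. For `S ⊆ ℕ` put `x_S = ∑_{j ∈ S} 1 / a (c j)`; these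
points are pairwise distinct in `𝕋`. If `n` lies in the block `[n_k, n_{k+1})`, then `d_n` is
a multiple of `a k` not exceeding `a (k + 1)`, so `d_n` kills every term with `c j ≤ k`, and the
remaining tail contributes at most `(4/3) 2^{-(c_K - k - 1)}`, where `c_K` is the first `c j`
beyond `k`. Hence `‖d_n x_S‖ ≥ ε` forces `k + 1 = c_K - m` for some `m` bounded in terms of
`ε`, that is `n ∈ L(A - m)` for one of finitely many `m`, and these sets have density zero.
-/

open Filter Topology Set

noncomputable section

open scoped Classical

local notation "𝕋" => AddCircle (1 : ℝ)

def subsetSum (q : ℕ → ℝ) (S : Set ℕ) : ℝ := ∑' j, S.indicator q j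

section Lacunary

variable {q : ℕ → ℝ} {r : ℝ}

lemma le_mul_pow_of_le_mul (hr0 : 0 ≤ r) (hq : ∀ j, q (j + 1) ≤ r * q j) (K i : ℕ) :
    q (K + i) ≤ q K * r ^ i := by
  induction i with
  | zero => simp
  | succ i ih =>
    calc q (K + (i + 1)) ≤ r * q (K + i) := hq _
      _ ≤ r * (q K * r ^ i) := mul_le_mul_of_nonneg_left ih hr0
      _ = q K * r ^ (i + 1) := by ring

lemma subsetSum_nonneg (h0 : ∀ j, 0 ≤ q j) (S : Set ℕ) : 0 ≤ subsetSum q S :=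
  tsum_nonneg (Set.indicator_nonneg fun j _ => h0 j)

variable (h0 : ∀ j, 0 ≤ q j) (hr0 : 0 ≤ r) (hr1 : r < 1) (hq : ∀ j, q (j + 1) ≤ r * q j)
include h0 hr0 hr1 hq

lemma summable_of_le_mul : Summable q :=
  Summable.of_nonneg_of_le h0 (fun j => by simpa using le_mul_pow_of_le_mul hr0 hq 0 j)
    ((summable_geometric_of_lt_one hr0 hr1).mul_left (q 0))

lemma tsum_indicator_nat_add_le (S : Set ℕ) (K : ℕ) :
    ∑' i, S.indicator q (i + K) ≤ q K / (1 - r) := by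
  calc ∑' i, S.indicator q (i + K) ≤ ∑' i, q K * r ^ i := by
        refine Summable.tsum_le_tsum (fun i => ?_) ?_
          ((summable_geometric_of_lt_one hr0 hr1).mul_left _)
        · rw [add_comm]
          exact (Set.indicator_le_self' (fun j _ => h0 j) _).trans
            (le_mul_pow_of_le_mul hr0 hq K i)
        · exact (summable_nat_add_iff K).2 ((summable_of_le_mul h0 hr0 hr1 hq).indicator S)
    _ = q K / (1 - r) := by
        rw [tsum_mul_left, tsum_geometric_of_lt_one hr0 hr1, div_eq_mul_inv]

lemma subsetSum_le (S : Set ℕ) : subsetSum q S ≤ q 0 / (1 - r) := by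
  simpa [subsetSum] using tsum_indicator_nat_add_le h0 hr0 hr1 hq S 0

lemma subsetSum_eq_sum_add_tsum (S : Set ℕ) (K : ℕ) :
    subsetSum q S = ∑ i ∈ Finset.range K, S.indicator q i + ∑' i, S.indicator q (i + K) :=
  (((summable_of_le_mul h0 hr0 hr1 hq).indicator S).sum_add_tsum_nat_add K).symm

lemma norm_zsmul_coe_subsetSum_le (S : Set ℕ) (d : ℤ) (K : ℕ)
    (hK : ∀ i < K, d • (q i : 𝕋) = 0) :
    ‖d • (subsetSum q S : 𝕋)‖ ≤ |(d : ℝ)| * (q K / (1 - r)) := by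
  have hhead : ∑ i ∈ Finset.range K, d • ((S.indicator q i : ℝ) : 𝕋) = 0 := by
    refine Finset.sum_eq_zero fun i hi => ?_
    by_cases hiS : i ∈ S
    · simp [hiS, hK i (Finset.mem_range.1 hi)]
    · simp [hiS]
  rw [subsetSum_eq_sum_add_tsum h0 hr0 hr1 hq S K, AddCircle.coe_add, smul_add,
    QuotientAddGroup.mk_sum, Finset.smul_sum, hhead, zero_add, ← AddCircle.coe_zsmul]
  calc _ ≤ ‖d • ∑' i, S.indicator q (i + K)‖ := QuotientAddGroup.norm_mk_le_norm
    _ = |(d : ℝ)| * ∑' i, S.indicator q (i + K) := by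
        rw [norm_zsmul ℝ, Real.norm_eq_abs, Real.norm_of_nonneg
          (tsum_nonneg fun i => Set.indicator_nonneg (fun j _ => h0 j) _)]
    _ ≤ |(d : ℝ)| * (q K / (1 - r)) :=
        mul_le_mul_of_nonneg_left (tsum_indicator_nat_add_le h0 hr0 hr1 hq S K) (abs_nonneg _)

end Lacunary

section Injective

variable {q : ℕ → ℝ} {r : ℝ} (hpos : ∀ j, 0 < q j) (hr0 : 0 ≤ r) (hr : r < 1 / 2)
  (hq : ∀ j, q (j + 1) ≤ r * q j)
include hpos hr0 hr hq

lemma subsetSum_lt_subsetSum {S T : Set ℕ} {j : ℕ} (hjS : j ∈ S) (hjT : j ∉ T)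
    (hagree : ∀ i < j, i ∈ S ↔ i ∈ T) : subsetSum q T < subsetSum q S := by
  have h0 : ∀ j, 0 ≤ q j := fun j => (hpos j).le
  have hr1 : r < 1 := by linarith
  have hsplit (U : Set ℕ) := subsetSum_eq_sum_add_tsum h0 hr0 hr1 hq U (j + 1)
  have hhead :
      ∑ i ∈ Finset.range j, T.indicator q i = ∑ i ∈ Finset.range j, S.indicator q i :=
    Finset.sum_congr rfl fun i hi => by
      simp only [Set.indicator, hagree i (Finset.mem_range.1 hi)]
  have htailT := tsum_indicator_nat_add_le h0 hr0 hr1 hq T (j + 1)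
  have htailS : 0 ≤ ∑' i, S.indicator q (i + (j + 1)) :=
    tsum_nonneg fun i => Set.indicator_nonneg (fun k _ => h0 k) _
  -- the tail after `j` is at most `r / (1 - r) < 1` times `q j`
  have hdom : q (j + 1) / (1 - r) < q j := by
    rw [div_lt_iff₀ (by linarith)]
    nlinarith [hq j, hpos j]
  rw [hsplit T, hsplit S, Finset.sum_range_succ, Finset.sum_range_succ, hhead,
    Set.indicator_of_mem hjS, Set.indicator_of_notMem hjT]
  linarith

lemma subsetSum_injective : Function.Injective (subsetSum q) := by
  intro S T hST
  by_contra hne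
  have hex : ∃ j, ¬(j ∈ S ↔ j ∈ T) := by
    by_contra! h
    exact hne (Set.ext h)
  have hagree : ∀ i < Nat.find hex, i ∈ S ↔ i ∈ T := fun i hi =>
    not_not.1 (Nat.find_min hex hi)
  by_cases hjS : Nat.find hex ∈ S
  · have hjT : Nat.find hex ∉ T := fun hjT => Nat.find_spec hex (iff_of_true hjS hjT)
    exact (subsetSum_lt_subsetSum hpos hr0 hr hq hjS hjT hagree).ne hST.symm
  · have hjT : Nat.find hex ∈ T := by
      by_contra hjT
      exact Nat.find_spec hex (iff_of_false hjS hjT)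
    exact (subsetSum_lt_subsetSum hpos hr0 hr hq hjT hjS fun i hi => (hagree i hi).symm).ne hST

end Injective

lemma zsmul_coe_inv_natCast_eq_zero {m : ℕ} {d : ℤ} (hm : 0 < m) (h : (m : ℤ) ∣ d) :
    d • (((m : ℝ)⁻¹ : ℝ) : 𝕋) = 0 := by
  rw [← addOrderOf_dvd_iff_zsmul_eq_zero, ← one_div, AddCircle.addOrderOf_period_div hm]
  exact h

section Density

lemma hasDensity_zero_of_subset {B C : Set ℕ} (hBC : B ⊆ C) (hC : HasDensity C 0) :
    HasDensity B 0 :=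
  squeeze_zero (fun _ => by positivity) (fun n => by
    gcongr
    exact (Set.finite_Iio n).inter_of_right C) hC

lemma hasDensity_zero_of_finite {B : Set ℕ} (hB : B.Finite) : HasDensity B 0 :=
  squeeze_zero (fun _ => by positivity)
    (fun n => div_le_div_of_nonneg_right (b := (B.ncard : ℝ))
      (by exact_mod_cast Set.ncard_le_ncard Set.inter_subset_left hB) (Nat.cast_nonneg n))
    (tendsto_const_div_atTop_nhds_zero_nat _)

lemma hasDensity_zero_union {B C : Set ℕ} (hB : HasDensity B 0) (hC : HasDensity C 0) :
    HasDensity (B ∪ C) 0 := by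
  refine squeeze_zero (fun _ => by positivity) (fun n => ?_) (by simpa using hB.add hC)
  rw [← add_div, Set.union_inter_distrib_right]
  gcongr
  exact_mod_cast Set.ncard_union_le _ _

lemma hasDensity_zero_biUnion {ι : Type*} (s : Finset ι) {f : ι → Set ℕ}
    (hf : ∀ i ∈ s, HasDensity (f i) 0) : HasDensity (⋃ i ∈ s, f i) 0 := by
  induction s using Finset.induction_on with
  | empty => simpa using hasDensity_zero_of_finite Set.finite_empty
  | insert i s _ ih =>
    rw [Finset.set_biUnion_insert]
    exact hasDensity_zero_union (hf i (Finset.mem_insert_self i s))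
      (ih fun j hj => hf j (Finset.mem_insert_of_mem hj))

end Density

lemma count_eq_count_add_one_of_gap {p : ℕ → Prop} [DecidablePred p] {m m' : ℕ}
    (hmm' : m < m') (hm : p m) (hgap : ∀ x, m < x → x < m' → ¬p x) :
    Nat.count p m' = Nat.count p m + 1 := by
  obtain ⟨t, rfl⟩ := Nat.exists_eq_add_of_lt hmm'
  rw [add_right_comm, Nat.count_add p (m + 1) t, Nat.count_succ, if_pos hm,
    (Nat.count_iff_forall_not (p := fun k => p (m + 1 + k)) (n := t)).2
      fun i hi => hgap _ (by omega) (by omega), add_zero]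

def dTerms (a : ℕ → ℕ) : Set ℕ :=
  {m | ∃ k r : ℕ, 1 ≤ r ∧ r < ratios a (k + 1) ∧ m = r * a k}

lemma dSeq_eq_nth (a : ℕ → ℕ) : dSeq a = Nat.nth (· ∈ dTerms a) := rfl

def sparseIdx (A : Set ℕ) (j : ℕ) : ℕ := Nat.nth (· ∈ A) (2 * j + 1)

def sparseRecip (a : ℕ → ℕ) (A : Set ℕ) (j : ℕ) : ℝ := (a (sparseIdx A j) : ℝ)⁻¹

section Sparse

variable {A : Set ℕ} (hA : A.Infinite)
include hA

lemma sparseIdx_mem (j : ℕ) : sparseIdx A j ∈ A := Nat.nth_mem_of_infinite hA _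

lemma le_sparseIdx (j : ℕ) : 2 * j + 1 ≤ sparseIdx A j := (Nat.nth_strictMono hA).id_le _

lemma sparseIdx_add_two_le (j : ℕ) : sparseIdx A j + 2 ≤ sparseIdx A (j + 1) := by
  have h1 := Nat.nth_strictMono (p := (· ∈ A)) hA (show 2 * j + 1 < 2 * j + 2 by omega)
  have h2 := Nat.nth_strictMono (p := (· ∈ A)) hA (show 2 * j + 2 < 2 * (j + 1) + 1 by omega)
  simp only [sparseIdx]
  omega

end Sparse

namespace IsArithSeq

variable {a : ℕ → ℕ} (ha : IsArithSeq a) {A : Set ℕ} (hA : A.Infinite)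
include ha

lemma pos (n : ℕ) : 0 < a n := by
  induction n with
  | zero => simp [ha.1]
  | succ n ih => exact ih.trans (ha.2.1 n)

lemma strictMono : StrictMono a := strictMono_nat_of_lt_succ ha.2.1

lemma dvd_of_le {i j : ℕ} (hij : i ≤ j) : a i ∣ a j := by
  induction j, hij using Nat.le_induction with
  | base => exact dvd_rfl
  | succ j _ ih => exact ih.trans (ha.2.2 j)

lemma ratios_mul (k : ℕ) : ratios a (k + 1) * a k = a (k + 1) :=
  Nat.div_mul_cancel (ha.2.2 k)

lemma two_le_ratios (k : ℕ) : 2 ≤ ratios a (k + 1) := by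
  have h : a k * 1 < ratios a (k + 1) * a k := by rw [mul_one, ratios_mul ha]; exact ha.2.1 k
  rw [mul_comm] at h
  exact Nat.lt_of_mul_lt_mul_right h

lemma mul_two_pow_le (i t : ℕ) : a i * 2 ^ t ≤ a (i + t) := by
  induction t with
  | zero => simp
  | succ t ih =>
    calc a i * 2 ^ (t + 1) = a i * 2 ^ t * 2 := by ring
      _ ≤ a (i + t) * ratios a (i + t + 1) := Nat.mul_le_mul ih (two_le_ratios ha _)
      _ = a (i + (t + 1)) := by rw [mul_comm, ratios_mul ha]; rfl

lemma nseq_succ_add_one (k : ℕ) : nseq a (k + 1) + 1 = nseq a k + ratios a (k + 1) := by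
  have := two_le_ratios ha k
  simp only [nseq]
  omega

lemma nseq_strictMono : StrictMono (nseq a) :=
  strictMono_nat_of_lt_succ fun k => by
    have := nseq_succ_add_one ha k
    have := two_le_ratios ha k
    omega

lemma exists_nseq_le_lt {n : ℕ} (hn : 1 ≤ n) :
    ∃ k, nseq a k ≤ n ∧ n < nseq a (k + 1) := by
  have hex : ∃ j, n < nseq a j :=
    ⟨n + 1, Nat.lt_of_succ_le ((nseq_strictMono ha).id_le (n + 1))⟩
  obtain ⟨k, hk⟩ : ∃ k, Nat.find hex = k + 1 :=
    Nat.exists_eq_succ_of_ne_zero fun h0 => by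
      have := Nat.find_spec hex
      simp only [h0, nseq] at this
      omega
  refine ⟨k, ?_, hk ▸ Nat.find_spec hex⟩
  exact not_lt.1 (Nat.find_min hex (by omega))

lemma mul_mem_dTerms {k r : ℕ} (hr1 : 1 ≤ r) (hr : r ≤ ratios a (k + 1)) :
    r * a k ∈ dTerms a := by
  rcases hr.lt_or_eq with hlt | rfl
  · exact ⟨k, r, hr1, hlt, rfl⟩
  · exact ⟨k + 1, 1, le_rfl, two_le_ratios ha (k + 1), by rw [one_mul, ratios_mul ha]⟩

-- `dTerms a ∩ [a j, a (j + 1))` consists of multiples of `a j`, and these intervals are disjoint.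
lemma notMem_dTerms_of_lt_of_lt {k r x : ℕ} (hr1 : 1 ≤ r) (hr : r < ratios a (k + 1))
    (hx1 : r * a k < x) (hx2 : x < (r + 1) * a k) : x ∉ dTerms a := by
  rintro ⟨j, r', hr'1, hr', rfl⟩
  have hj : r' * a j < a (j + 1) := by
    rw [← ratios_mul ha]; exact Nat.mul_lt_mul_of_pos_right hr' (pos ha j)
  have hk : (r + 1) * a k ≤ a (k + 1) := by
    rw [← ratios_mul ha]; exact Nat.mul_le_mul_right _ hr
  have hjk : j = k := by
    have h1 : a j < a (k + 1) := by nlinarith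
    have h2 : a k < a (j + 1) := by nlinarith
    rw [(strictMono ha).lt_iff_lt] at h1 h2
    omega
  subst hjk
  have h1 := Nat.lt_of_mul_lt_mul_right hx1
  have h2 := Nat.lt_of_mul_lt_mul_right hx2
  omega

lemma count_dTerms_succ_mul {k r : ℕ} (hr1 : 1 ≤ r) (hr : r < ratios a (k + 1)) :
    Nat.count (· ∈ dTerms a) ((r + 1) * a k) = Nat.count (· ∈ dTerms a) (r * a k) + 1 :=
  count_eq_count_add_one_of_gap (Nat.mul_lt_mul_of_pos_right (Nat.lt_succ_self r) (pos ha k))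
    (mul_mem_dTerms ha hr1 hr.le) fun _ hx1 hx2 => notMem_dTerms_of_lt_of_lt ha hr1 hr hx1 hx2

lemma count_dTerms_mul {k : ℕ} (hk : Nat.count (· ∈ dTerms a) (a k) + 1 = nseq a k) {r : ℕ}
    (hr1 : 1 ≤ r) (hr : r ≤ ratios a (k + 1)) :
    Nat.count (· ∈ dTerms a) (r * a k) + 2 = nseq a k + r := by
  induction r, hr1 using Nat.le_induction with
  | base => rw [one_mul]; omega
  | succ r hr1 ih =>
    rw [count_dTerms_succ_mul ha hr1 (by omega)]
    have := ih (by omega)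
    omega

lemma count_dTerms_add_one (k : ℕ) : Nat.count (· ∈ dTerms a) (a k) + 1 = nseq a k := by
  induction k with
  | zero =>
    have h0 : (0 : ℕ) ∉ dTerms a := by
      rintro ⟨j, r, hr1, -, h⟩
      have := Nat.mul_pos hr1 (pos ha j)
      omega
    simp [ha.1, Nat.count_one, h0, nseq]
  | succ k ih =>
    have h := count_dTerms_mul ha ih (le_of_lt (two_le_ratios ha k)) le_rfl
    rw [ratios_mul ha] at h
    have := nseq_succ_add_one ha k
    omega

lemma dSeq_eq_of_nseq_le_lt {k n : ℕ} (h1 : nseq a k ≤ n) (h2 : n < nseq a (k + 1)) :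
    dSeq a n = (n + 2 - nseq a k) * a k := by
  have hsucc := nseq_succ_add_one ha k
  have hmem := mul_mem_dTerms ha (k := k) (r := n + 2 - nseq a k) (by omega) (by omega)
  have hcount := count_dTerms_mul ha (count_dTerms_add_one ha k) (r := n + 2 - nseq a k)
    (by omega) (by omega)
  rw [dSeq_eq_nth, ← Nat.nth_count (p := (· ∈ dTerms a)) hmem]
  congr 1
  omega

lemma sparseRecip_pos (j : ℕ) : 0 < sparseRecip a A j := by
  unfold sparseRecip
  exact inv_pos.2 (by exact_mod_cast ha.pos _)

include hA

lemma sparseRecip_succ_le (j : ℕ) : sparseRecip a A (j + 1) ≤ 1 / 4 * sparseRecip a A j := by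
  have h : a (sparseIdx A j) * 2 ^ 2 ≤ a (sparseIdx A (j + 1)) :=
    (mul_two_pow_le ha _ 2).trans ((strictMono ha).monotone (sparseIdx_add_two_le hA j))
  unfold sparseRecip
  rw [one_div, ← mul_inv]
  have hpos := ha.pos (sparseIdx A j)
  exact inv_anti₀ (by positivity) (by exact_mod_cast (by omega : 4 * a (sparseIdx A j) ≤ _))

lemma sparseRecip_zero_le : sparseRecip a A 0 ≤ 1 / 2 := by
  have h : a 0 * 2 ^ 1 ≤ a (sparseIdx A 0) :=
    (mul_two_pow_le ha 0 1).trans ((strictMono ha).monotone (by simpa using le_sparseIdx hA 0))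
  rw [ha.1] at h
  unfold sparseRecip
  rw [one_div]
  exact inv_anti₀ (by norm_num) (by exact_mod_cast (by omega : 2 ≤ a (sparseIdx A 0)))

lemma injective_coe_subsetSum :
    Function.Injective fun S => (subsetSum (sparseRecip a A) S : 𝕋) := by
  have hq := sparseRecip_succ_le ha hA
  have h0 j := (sparseRecip_pos ha (A := A) j).le
  have hIco (S : Set ℕ) : subsetSum (sparseRecip a A) S ∈ Set.Ico 0 (0 + 1) := by
    refine ⟨subsetSum_nonneg h0 S, ?_⟩
    have hle := subsetSum_le h0 (by norm_num) (by norm_num) hq S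
    norm_num at hle
    linarith [sparseRecip_zero_le ha hA]
  intro S T hST
  exact subsetSum_injective (sparseRecip_pos ha) (by norm_num) (by norm_num) hq
    ((AddCircle.coe_eq_coe_iff_of_mem_Ico (hIco S) (hIco T)).1 hST)

lemma norm_dSeq_zsmul_le (S : Set ℕ) {k n K : ℕ} (h1 : nseq a k ≤ n) (h2 : n < nseq a (k + 1))
    (hbelow : ∀ i < K, sparseIdx A i ≤ k) (habove : k < sparseIdx A K) :
    ‖(dSeq a n : ℤ) • (subsetSum (sparseRecip a A) S : 𝕋)‖ ≤
      4 / 3 * (1 / 2) ^ (sparseIdx A K - (k + 1)) := by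
  set t := sparseIdx A K - (k + 1)
  have hd := dSeq_eq_of_nseq_le_lt ha h1 h2
  have hsucc := nseq_succ_add_one ha k
  have hdvd : a k ∣ dSeq a n := hd ▸ dvd_mul_left _ _
  have hle : dSeq a n * 2 ^ t ≤ a (sparseIdx A K) :=
    calc dSeq a n * 2 ^ t ≤ a (k + 1) * 2 ^ t := by
          rw [hd, ← ratios_mul ha]; gcongr; omega
      _ ≤ a (sparseIdx A K) := by
          simpa [show k + 1 + t = sparseIdx A K by omega] using mul_two_pow_le ha (k + 1) t
  have hK (i : ℕ) (hi : i < K) : (dSeq a n : ℤ) • ((sparseRecip a A i : ℝ) : 𝕋) = 0 :=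
    zsmul_coe_inv_natCast_eq_zero (ha.pos _)
      (Int.natCast_dvd_natCast.2 ((dvd_of_le ha (hbelow i hi)).trans hdvd))
  refine (norm_zsmul_coe_subsetSum_le (fun j => (sparseRecip_pos ha j).le) (r := 1 / 4)
    (by norm_num) (by norm_num) (sparseRecip_succ_le ha hA) S _ K hK).trans ?_
  have hpos : (0 : ℝ) < a (sparseIdx A K) := by exact_mod_cast ha.pos _
  have hle' : (dSeq a n : ℝ) * 2 ^ t ≤ a (sparseIdx A K) := by exact_mod_cast hle
  rw [Int.cast_natCast, abs_of_nonneg (Nat.cast_nonneg _), sparseRecip, one_div_pow]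
  field_simp
  nlinarith

lemma coe_subsetSum_mem_statChar (hAd : ∀ m, HasDensity (liftSet a ((fun x => x - m) '' A)) 0)
    (S : Set ℕ) :
    (subsetSum (sparseRecip a A) S : 𝕋) ∈ statChar (fun n => (dSeq a n : ℤ)) := by
  intro ε hε
  obtain ⟨M, hM⟩ := exists_pow_lt_of_lt_one (by positivity : 0 < 3 / 4 * ε)
    (by norm_num : (1 / 2 : ℝ) < 1)
  -- a bad `n ≥ 1` lies in `L({k + 1})` with `k + 1 ∈ A - m` and `m < M`
  refine hasDensity_zero_of_subset
    (C := {0} ∪ ⋃ m ∈ Finset.range M, liftSet a ((· - m) '' A))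
    (fun n hn => ?_) (hasDensity_zero_union (hasDensity_zero_of_finite (Set.finite_singleton 0))
      (hasDensity_zero_biUnion _ fun m _ => hAd m))
  rcases Nat.eq_zero_or_pos n with rfl | hn0
  · exact Or.inl rfl
  obtain ⟨k, hk1, hk2⟩ := exists_nseq_le_lt ha hn0
  have hex : ∃ K, k < sparseIdx A K := ⟨k, by have := le_sparseIdx hA k; omega⟩
  obtain ⟨K, hbelow, habove⟩ : ∃ K, (∀ i < K, sparseIdx A i ≤ k) ∧ k < sparseIdx A K :=
    ⟨Nat.find hex, fun i hi => not_lt.1 (Nat.find_min hex hi), Nat.find_spec hex⟩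
  have hm : sparseIdx A K - (k + 1) < M := by
    by_contra! hle
    have : (1 / 2 : ℝ) ^ (sparseIdx A K - (k + 1)) ≤ (1 / 2) ^ M :=
      pow_le_pow_of_le_one (by norm_num) (by norm_num) hle
    have : ε ≤ ‖(dSeq a n : ℤ) • (subsetSum (sparseRecip a A) S : 𝕋)‖ := hn
    linarith [norm_dSeq_zsmul_le ha hA S hk1 hk2 hbelow habove]
  have hk : k + 1 ∈ (· - (sparseIdx A K - (k + 1))) '' A :=
    ⟨sparseIdx A K, sparseIdx_mem hA K, by simp only; omega⟩
  refine Or.inr (Set.mem_iUnion₂.2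
    ⟨_, Finset.mem_range.2 hm, Set.mem_iUnion₂.2 ⟨k + 1, hk, ?_⟩⟩)
  simp only [Nat.add_sub_cancel, Set.mem_Icc]
  omega

end IsArithSeq

/-- if `(a n)` is weakly dli then `t^s_{(d n)}(𝕋)` has cardinality continuum. -/
theorem statChar_continuum_of_weaklyDli (a : ℕ → ℕ) (ha : IsArithSeq a) (h : WeaklyDli a) :
    Cardinal.mk ↥(statChar (fun n => (dSeq a n : ℤ))) = Cardinal.continuum := by
  obtain ⟨A, hA, hAd⟩ := h
  refine le_antisymm ?_ ?_
  · calc Cardinal.mk ↥(statChar (fun n => (dSeq a n : ℤ)))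
        ≤ Cardinal.mk 𝕋 := Cardinal.mk_set_le _
      _ ≤ Cardinal.mk ℝ := Cardinal.mk_le_of_surjective QuotientAddGroup.mk_surjective
      _ = Cardinal.continuum := Cardinal.mk_real
  · have hinj : Function.Injective fun S : Set ℕ =>
        (⟨_, ha.coe_subsetSum_mem_statChar hA hAd S⟩ : statChar (fun n => (dSeq a n : ℤ))) :=
      fun S T hST => ha.injective_coe_subsetSum hA (congrArg Subtype.val hST)
    simpa [Cardinal.mk_set, Cardinal.two_power_aleph0] using Cardinal.mk_le_of_injective hinj
end
end

section
/- For the arithmetic sequence a_n = n!, the statistically characterized subgroup t^s_{(d_n)}(T) has cardinality of the continuum. -/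
open Filter Topology Set

noncomputable section

/-!
For `T ⊆ ℕ` let `x_T = ∑_{t ∈ T} 1/t!`. Every `d_n` is `r * k!` with `1 ≤ r ≤ k`, and for such
`m` the number `m * x_T` is an integer plus `m * ∑_{t ∈ T, t > k} 1/t!`, which is at most
`2/(k+2)` when `k + 1 ∉ T`. Hence `‖d_n x_T‖ ≥ ε` forces `k` to be bounded or `k + 1 ∈ T`. When
`2t ≤ t'` for all `t < t'` in `T`, fewer than `C √N` indices `n < N` are of this kind, since the
block of `k` has `k` terms while the blocks below it already have about `k²/2`. The sets
`T = {2^(i+2) : i ∈ S}` then give `2^ℵ₀` distinct points `x_T ∈ [0, 1)` of the subgroup.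
-/

open scoped Nat

def factorialSeries (T : Set ℕ) : ℝ := ∑' t, T.indicator (fun t => (t ! : ℝ)⁻¹) t

lemma summable_indicator_inv_factorial (T : Set ℕ) :
    Summable (T.indicator fun t => (t ! : ℝ)⁻¹) := by
  refine Summable.indicator ?_ T
  simpa using Real.summable_pow_div_factorial 1

lemma indicator_inv_factorial_nonneg (T : Set ℕ) (t : ℕ) :
    0 ≤ T.indicator (fun t => (t ! : ℝ)⁻¹) t :=
  indicator_nonneg (fun _ _ => by positivity) t

lemma factorialSeries_nonneg (T : Set ℕ) : 0 ≤ factorialSeries T :=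
  tsum_nonneg (indicator_inv_factorial_nonneg T)

lemma factorialSeries_mono {T T' : Set ℕ} (h : T ⊆ T') : factorialSeries T ≤ factorialSeries T' :=
  (summable_indicator_inv_factorial T).tsum_le_tsum
    (indicator_le_indicator_of_subset h fun _ => by positivity)
    (summable_indicator_inv_factorial T')

lemma factorialSeries_inter_add_diff (T s : Set ℕ) :
    factorialSeries (T ∩ s) + factorialSeries (T \ s) = factorialSeries T := by
  rw [factorialSeries, factorialSeries, factorialSeries,
    ← (summable_indicator_inv_factorial _).tsum_add (summable_indicator_inv_factorial _),
    ← indicator_union_of_disjoint disjoint_sdiff_inter.symm, inter_union_sdiff]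

lemma factorialSeries_singleton (n : ℕ) : factorialSeries {n} = (n ! : ℝ)⁻¹ := by
  simp [factorialSeries, indicator, tsum_ite_eq]

lemma factorialSeries_le_of_subset_Ioi {T : Set ℕ} {n : ℕ} (hT : T ⊆ Ioi n) :
    factorialSeries T ≤ 2 / (n + 1)! := by
  have hzero : ∀ t ∈ Finset.range (n + 1), T.indicator (fun t => (t ! : ℝ)⁻¹) t = 0 :=
    fun t ht => indicator_of_notMem
      (fun htT => by have := hT htT; simp at ht this; omega) _
  have hterm (s : ℕ) : T.indicator (fun t => (t ! : ℝ)⁻¹) (s + (n + 1)) ≤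
      ((n + 1)! : ℝ)⁻¹ * 2⁻¹ ^ s := by
    refine (indicator_le_self' (fun _ _ => by positivity) _).trans ?_
    rw [inv_pow, ← mul_inv]
    gcongr
    calc ((n + 1)! : ℝ) * 2 ^ s ≤ (n + 1)! * (n + 1 + 1) ^ s := by gcongr; linarith
      _ ≤ (s + (n + 1))! := by
        rw [add_comm s]; exact_mod_cast Nat.factorial_mul_pow_le_factorial
  calc factorialSeries T
      = ∑' s, T.indicator (fun t => (t ! : ℝ)⁻¹) (s + (n + 1)) := by
        rw [factorialSeries, ← (summable_indicator_inv_factorial T).sum_add_tsum_nat_add (n + 1),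
          Finset.sum_eq_zero hzero, zero_add]
    _ ≤ ∑' s : ℕ, ((n + 1)! : ℝ)⁻¹ * 2⁻¹ ^ s :=
        ((summable_nat_add_iff _).mpr (summable_indicator_inv_factorial T)).tsum_le_tsum hterm
          ((summable_geometric_of_lt_one (by norm_num) (by norm_num)).mul_left _)
    _ = 2 / (n + 1)! := by rw [tsum_mul_left, tsum_geometric_inv_two]; ring

lemma factorialSeries_lt_of_inter_Iio_eq {T T' : Set ℕ} {n : ℕ} (hn : 1 < n)
    (heq : T ∩ Iio n = T' ∩ Iio n) (hnT : n ∈ T) (hnT' : n ∉ T') :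
    factorialSeries T' < factorialSeries T := by
  have hhead : (n ! : ℝ)⁻¹ ≤ factorialSeries (T \ Iio n) := by
    rw [← factorialSeries_singleton]
    exact factorialSeries_mono (by simpa using hnT)
  have htail : factorialSeries (T' \ Iio n) ≤ 2 / (n + 1)! :=
    factorialSeries_le_of_subset_Ioi fun t ⟨ht, htn⟩ => by
      have : t ≠ n := by rintro rfl; exact hnT' ht
      simp only [mem_Iio, mem_Ioi] at htn ⊢
      omega
  have hgap : (2 : ℝ) / (n + 1)! < (n ! : ℝ)⁻¹ := by
    rw [Nat.factorial_succ, Nat.cast_mul, ← div_div, div_lt_iff₀ (by positivity),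
      inv_mul_cancel₀ (by positivity), div_lt_one (by positivity)]
    exact_mod_cast Nat.lt_add_one_iff.mpr hn
  have hsplit := factorialSeries_inter_add_diff T (Iio n)
  have hsplit' := factorialSeries_inter_add_diff T' (Iio n)
  rw [heq] at hsplit
  linarith

open scoped symmDiff in
lemma factorialSeries_injOn : InjOn factorialSeries {T | T ⊆ Ioi 1} := by
  classical
  intro T hT T' hT' h
  by_contra hne
  have hex : ∃ n, n ∈ T ∆ T' := symmDiff_nonempty.mpr hne
  have hagree : T ∩ Iio (Nat.find hex) = T' ∩ Iio (Nat.find hex) := by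
    ext t
    have := fun ht => Nat.find_min hex (m := t) ht
    simp only [mem_symmDiff, mem_inter_iff, mem_Iio] at this ⊢
    tauto
  rcases Nat.find_spec hex with ⟨hn, hn'⟩ | ⟨hn', hn⟩
  · exact (factorialSeries_lt_of_inter_Iio_eq (hT hn) hagree hn hn').ne' h
  · exact (factorialSeries_lt_of_inter_Iio_eq (hT' hn') hagree.symm hn' hn).ne h

lemma factorialSeries_lt_one {T : Set ℕ} (hT : T ⊆ Ioi 2) : factorialSeries T < 1 := by
  have := factorialSeries_le_of_subset_Ioi hT
  norm_num [Nat.factorial] at this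
  linarith

lemma coe_factorialSeries_injOn :
    InjOn (fun T => (factorialSeries T : AddCircle (1 : ℝ))) {T | T ⊆ Ioi 2} := by
  intro T hT T' hT' h
  have hIco (T : Set ℕ) (hT : T ⊆ Ioi 2) : factorialSeries T ∈ Ico 0 (0 + 1) :=
    ⟨factorialSeries_nonneg T, by simpa using factorialSeries_lt_one hT⟩
  exact factorialSeries_injOn (fun t ht => mem_Ioi.mpr (one_lt_two.trans (hT ht)))
    (fun t ht => mem_Ioi.mpr (one_lt_two.trans (hT' ht)))
    ((AddCircle.coe_eq_coe_iff_of_mem_Ico (hIco T hT) (hIco T' hT')).mp h)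

lemma exists_natCast_eq_mul_factorialSeries {T : Set ℕ} {k m : ℕ} (hT : T ⊆ Iic k)
    (hm : k ! ∣ m) : ∃ z : ℕ, (m : ℝ) * factorialSeries T = z := by
  classical
  refine ⟨∑ t ∈ Finset.range (k + 1), T.indicator (fun t => m / t !) t, ?_⟩
  rw [factorialSeries, tsum_eq_sum (s := Finset.range (k + 1)), Finset.mul_sum, Nat.cast_sum]
  · refine Finset.sum_congr rfl fun t ht => ?_
    by_cases htT : t ∈ T
    · have hdvd : t ! ∣ m := (Nat.factorial_dvd_factorial (hT htT)).trans hm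
      simp [indicator_of_mem htT, Nat.cast_div (K := ℝ) hdvd (by positivity), div_eq_mul_inv]
    · simp [indicator_of_notMem htT]
  · intro t ht
    exact indicator_of_notMem (fun htT => ht (by simpa [Nat.lt_succ_iff] using hT htT)) _

lemma norm_zsmul_factorialSeries_le {T : Set ℕ} {k m : ℕ} (hm : k ! ∣ m) (hmk : m ≤ (k + 1)!)
    (hk : k + 1 ∉ T) :
    ‖(m : ℤ) • (factorialSeries T : AddCircle (1 : ℝ))‖ ≤ 2 / (k + 2) := by
  obtain ⟨z, hz⟩ := exists_natCast_eq_mul_factorialSeries (T := T ∩ Iic k) inter_subset_right hm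
  have htail : factorialSeries (T \ Iic k) ≤ 2 / (k + 1 + 1)! :=
    factorialSeries_le_of_subset_Ioi fun t ⟨ht, htk⟩ => by
      have : t ≠ k + 1 := by rintro rfl; exact hk ht
      simp only [mem_Iic, mem_Ioi] at htk ⊢
      omega
  have hsmul : (m : ℤ) • (factorialSeries T : AddCircle (1 : ℝ)) =
      ((m * factorialSeries (T \ Iic k) : ℝ) : AddCircle (1 : ℝ)) := by
    rw [← factorialSeries_inter_add_diff T (Iic k), ← AddCircle.coe_zsmul, zsmul_eq_mul,
      Int.cast_natCast, mul_add, hz, AddCircle.coe_add,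
      (AddCircle.coe_eq_zero_iff 1).mpr ⟨z, by simp⟩, zero_add]
  calc ‖(m : ℤ) • (factorialSeries T : AddCircle (1 : ℝ))‖
      ≤ |(m : ℝ) * factorialSeries (T \ Iic k)| := by
        rw [hsmul]; exact QuotientAddGroup.norm_mk_le_norm
    _ = m * factorialSeries (T \ Iic k) :=
        abs_of_nonneg (mul_nonneg (Nat.cast_nonneg m) (factorialSeries_nonneg _))
    _ ≤ (k + 1)! * (2 / (k + 1 + 1)!) := by
        gcongr
        exact factorialSeries_nonneg _
    _ = 2 / (k + 2) := by
        rw [Nat.factorial_succ (k + 1)]; push_cast; field_simp; ring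

lemma hasDensity_zero_of_ncard_le_sqrt {A : Set ℕ} (C D : ℕ)
    (h : ∀ N, (A ∩ Iio N).ncard ≤ C + D * Nat.sqrt N) : HasDensity A 0 := by
  have hlim : Tendsto (fun N : ℕ => (C : ℝ) / N + D / √N) atTop (𝓝 0) := by
    simpa using (tendsto_const_div_atTop_nhds_zero_nat (C : ℝ)).add
      (tendsto_const_nhds.div_atTop (Real.tendsto_sqrt_atTop.comp tendsto_natCast_atTop_atTop))
  refine tendsto_of_tendsto_of_tendsto_of_le_of_le tendsto_const_nhds hlim
    (fun N => by positivity) fun N => ?_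
  have hcount : ((A ∩ Iio N).ncard : ℝ) ≤ C + D * Nat.sqrt N := by exact_mod_cast h N
  calc ((A ∩ Iio N).ncard : ℝ) / N ≤ (C + D * √N) / N := by
        gcongr
        exact hcount.trans (by gcongr; exact Real.nat_sqrt_le_real_sqrt)
    _ = C / N + D / √N := by rw [add_div, mul_div_assoc, Real.sqrt_div_self, ← div_eq_mul_inv]

def IsLacunary (T : Set ℕ) : Prop := ∀ t ∈ T, ∀ t' ∈ T, t < t' → 2 * t ≤ t'

def blockPairs (I : Set ℕ) : Set (ℕ × ℕ) := {p | p.1 ∈ I ∧ 1 ≤ p.2 ∧ p.2 ≤ p.1}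

def blockValue (p : ℕ × ℕ) : ℕ := p.2 * p.1 !

def blockValues : Set ℕ := blockValue '' blockPairs univ

lemma blockPairs_mono : Monotone blockPairs :=
  fun _ _ h _ ⟨hk, hr⟩ => ⟨h hk, hr⟩

lemma blockPairs_union (I J : Set ℕ) : blockPairs (I ∪ J) = blockPairs I ∪ blockPairs J := by
  ext p
  simp only [blockPairs, mem_union, mem_ofPred_eq]
  tauto

lemma blockPairs_subset_prod {I : Set ℕ} {L : ℕ} (h : I ⊆ Iic L) :
    blockPairs I ⊆ Iic L ×ˢ Iic L :=
  fun _ ⟨hk, _, hr⟩ => ⟨h hk, hr.trans (h hk)⟩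

lemma finite_blockPairs {I : Set ℕ} {L : ℕ} (h : I ⊆ Iic L) : (blockPairs I).Finite :=
  ((finite_Iic L).prod (finite_Iic L)).subset (blockPairs_subset_prod h)

lemma ncard_blockPairs_le {I : Set ℕ} {L : ℕ} (h : I ⊆ Iic L) :
    (blockPairs I).ncard ≤ (L + 1) ^ 2 := by
  calc (blockPairs I).ncard ≤ (Iic L ×ˢ Iic L).ncard :=
        ncard_le_ncard (blockPairs_subset_prod h) ((finite_Iic L).prod (finite_Iic L))
    _ = (L + 1) ^ 2 := by
        rw [ncard_prod, ncard_Iic_nat, sq]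

lemma ncard_blockPairs_pred_le {T : Set ℕ} (hT : IsLacunary T)
    (L : ℕ) : (blockPairs ({k | k + 1 ∈ T} ∩ Iic L)).ncard ≤ 2 * L + 1 := by
  calc (blockPairs ({k | k + 1 ∈ T} ∩ Iic L)).ncard ≤ (Iio (2 * L + 1)).ncard := by
        refine ncard_le_ncard_of_injOn (fun p => p.1 + p.2) ?_ ?_ (finite_Iio _)
        · rintro ⟨k, r⟩ ⟨⟨-, hkL⟩, -, hrk⟩
          simp only [mem_Iic, mem_Iio] at hkL ⊢
          omega
        · rintro ⟨k, r⟩ ⟨⟨hk, -⟩, hr, hrk⟩ ⟨k', r'⟩ ⟨⟨hk', -⟩, hr', hrk'⟩ heq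
          simp only [mem_ofPred_eq] at hk hk' heq
          have hkk : k = k' := by
            rcases lt_trichotomy k k' with hlt | heq' | hlt
            · have := hT _ hk _ hk' (by omega); omega
            · exact heq'
            · have := hT _ hk' _ hk (by omega); omega
          simp only [Prod.mk.injEq]
          omega
    _ = 2 * L + 1 := by simp

lemma ratios_factorial_succ (k : ℕ) : ratios Nat.factorial (k + 1) = k + 1 := by
  rw [ratios, Nat.add_sub_cancel, Nat.factorial_succ, Nat.mul_div_cancel _ (Nat.factorial_pos k)]

lemma dSeq_factorial : dSeq Nat.factorial = Nat.nth (· ∈ blockValues) := by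
  rw [dSeq]
  congr
  ext m
  simp only [ratios_factorial_succ, blockValues, blockPairs, blockValue, mem_image,
    mem_ofPred_eq, mem_univ, true_and, Prod.exists, Nat.lt_succ_iff]
  constructor
  · rintro ⟨k, r, hr, hrk, rfl⟩
    exact ⟨k, r, ⟨hr, hrk⟩, rfl⟩
  · rintro ⟨k, r, ⟨hr, hrk⟩, rfl⟩
    exact ⟨k, r, hr, hrk, rfl⟩

lemma factorial_le_blockValue {p : ℕ × ℕ} (hp : 1 ≤ p.2) : p.1 ! ≤ blockValue p :=
  Nat.le_mul_of_pos_left _ hp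

lemma blockValue_lt_factorial_succ {p : ℕ × ℕ} (hp : p.2 ≤ p.1) : blockValue p < (p.1 + 1)! := by
  rw [blockValue, Nat.factorial_succ]
  exact Nat.mul_lt_mul_of_pos_right (Nat.lt_succ_of_le hp) (Nat.factorial_pos _)

lemma blockValue_injOn : InjOn blockValue (blockPairs univ) := by
  rintro ⟨k, r⟩ ⟨-, hr, hrk⟩ ⟨k', r'⟩ ⟨-, hr', hrk'⟩ h
  have hlt {k r k' r' : ℕ} (hr : 1 ≤ r) (hrk' : r' ≤ k') (hkk : k' < k) :
      r' * k' ! < r * k ! :=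
    calc r' * k' ! < (k' + 1)! := blockValue_lt_factorial_succ (p := (k', r')) hrk'
      _ ≤ k ! := Nat.factorial_le hkk
      _ ≤ r * k ! := factorial_le_blockValue (p := (k, r)) hr
  simp only [blockValue] at h
  obtain rfl : k = k' := by
    rcases lt_trichotomy k k' with hkk | hkk | hkk
    · exact absurd h (hlt hr' hrk hkk).ne
    · exact hkk
    · exact absurd h (hlt hr hrk' hkk).ne'
  rw [Nat.eq_of_mul_eq_mul_right (Nat.factorial_pos k) h]

lemma blockValues_infinite : blockValues.Infinite :=
  infinite_of_forall_exists_gt fun n =>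
    ⟨blockValue (n + 1, 1), ⟨(n + 1, 1), ⟨trivial, le_rfl, by omega⟩, rfl⟩,
      (Nat.lt_succ_self n).trans_le (by simpa [blockValue] using Nat.self_le_factorial (n + 1))⟩

lemma dSeq_factorial_strictMono : StrictMono (dSeq Nat.factorial) := by
  rw [dSeq_factorial]
  exact Nat.nth_strictMono blockValues_infinite

lemma dSeq_factorial_mem (n : ℕ) : dSeq Nat.factorial n ∈ blockValues := by
  rw [dSeq_factorial]
  exact Nat.nth_mem_of_infinite blockValues_infinite n

lemma ncard_blockValues_inter_Iio_dSeq (N : ℕ) :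
    (blockValues ∩ Iio (dSeq Nat.factorial N)).ncard = N := by
  classical
  have h := Nat.count_nth_of_infinite (p := (· ∈ blockValues)) blockValues_infinite N
  rw [Nat.count_eq_card_filter_range, ← Set.ncard_coe_finset] at h
  rw [dSeq_factorial]
  convert h using 2
  ext m
  simp [and_comm]

lemma le_two_mul_sqrt_of_factorial_le_dSeq {k N : ℕ} (h : k ! ≤ dSeq Nat.factorial N) :
    k ≤ 2 * Nat.sqrt N + 1 := by
  set q := k / 2
  -- the values `r * j!` with `q ≤ j < 2q`, `1 ≤ r ≤ q` are `q²` terms of `d` below `k! ≤ d N`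
  let R := Finset.Ico q (2 * q) ×ˢ Finset.Icc 1 q
  have hR : (R.image blockValue : Set ℕ) ⊆ blockValues ∩ Iio (dSeq Nat.factorial N) := by
    intro m hm
    simp only [Finset.coe_image, mem_image, Finset.mem_coe, R, Finset.mem_product,
      Finset.mem_Ico, Finset.mem_Icc] at hm
    obtain ⟨p, ⟨⟨hq, h2q⟩, hr, hrq⟩, rfl⟩ := hm
    refine ⟨⟨p, ⟨trivial, hr, hrq.trans hq⟩, rfl⟩, ?_⟩
    calc blockValue p < (p.1 + 1)! := blockValue_lt_factorial_succ (hrq.trans hq)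
      _ ≤ k ! := Nat.factorial_le (by omega)
      _ ≤ _ := h
  have hcard : (R.image blockValue).card = q ^ 2 := by
    rw [Finset.card_image_of_injOn, Finset.card_product, Nat.card_Ico, Nat.card_Icc]
    · rw [show 2 * q - q = q by omega, Nat.add_sub_cancel, sq]
    · intro p hp p' hp' hpp'
      simp only [Finset.coe_product, mem_prod, Finset.mem_coe, Finset.mem_Ico,
        Finset.mem_Icc, R] at hp hp'
      exact blockValue_injOn ⟨trivial, hp.2.1, hp.2.2.trans hp.1.1⟩
        ⟨trivial, hp'.2.1, hp'.2.2.trans hp'.1.1⟩ hpp'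
  have hq : q ^ 2 ≤ N := by
    rw [← hcard, ← Set.ncard_coe_finset, ← ncard_blockValues_inter_Iio_dSeq N]
    exact ncard_le_ncard hR ((finite_Iio _).inter_of_right _)
  have := Nat.le_sqrt'.mpr hq
  omega

lemma ncard_preimage_dSeq_inter_Iio_le (I : Set ℕ) (N : ℕ) :
    (dSeq Nat.factorial ⁻¹' (blockValue '' blockPairs I) ∩ Iio N).ncard ≤
      (blockPairs (I ∩ Iic (2 * Nat.sqrt N + 1))).ncard := by
  have hfin := finite_blockPairs (I := I ∩ Iic (2 * Nat.sqrt N + 1)) inter_subset_right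
  have hsub : dSeq Nat.factorial '' (dSeq Nat.factorial ⁻¹' (blockValue '' blockPairs I) ∩
      Iio N) ⊆ blockValue '' blockPairs (I ∩ Iic (2 * Nat.sqrt N + 1)) := by
    rintro _ ⟨n, ⟨⟨p, ⟨hk, hr, hrk⟩, hp⟩, hn⟩, rfl⟩
    refine ⟨p, ⟨⟨hk, le_two_mul_sqrt_of_factorial_le_dSeq ?_⟩, hr, hrk⟩, hp⟩
    calc p.1 ! ≤ blockValue p := factorial_le_blockValue hr
      _ = dSeq Nat.factorial n := hp
      _ ≤ dSeq Nat.factorial N := (dSeq_factorial_strictMono hn).le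
  rw [← ncard_image_of_injective _ dSeq_factorial_strictMono.injective]
  exact (ncard_le_ncard hsub (hfin.image _)).trans (ncard_image_le hfin)

lemma setOf_le_norm_zsmul_factorialSeries_subset {T : Set ℕ} {ε : ℝ} {K : ℕ}
    (hK : 2 / ((K : ℝ) + 2) < ε) :
    {n | ε ≤ ‖(dSeq Nat.factorial n : ℤ) • (factorialSeries T : AddCircle (1 : ℝ))‖} ⊆
      dSeq Nat.factorial ⁻¹' (blockValue '' blockPairs (Iic K ∪ {k | k + 1 ∈ T})) := by
  intro n hn
  obtain ⟨p, ⟨-, hr, hrk⟩, hp⟩ := dSeq_factorial_mem n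
  refine ⟨p, ⟨?_, hr, hrk⟩, hp⟩
  by_contra hp1
  simp only [mem_union, mem_Iic, mem_ofPred_eq, not_or, not_le] at hp1 hn
  have hsmall := norm_zsmul_factorialSeries_le (T := T) (m := blockValue p) (dvd_mul_left _ _)
    (blockValue_lt_factorial_succ hrk).le hp1.2
  have hK' : 2 / ((p.1 : ℝ) + 2) ≤ 2 / (K + 2) := by gcongr; exact_mod_cast hp1.1.le
  rw [hp] at hsmall
  linarith

lemma ncard_preimage_dSeq_inter_Iio_le_sqrt {T : Set ℕ}
    (hT : IsLacunary T) (K N : ℕ) :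
    (dSeq Nat.factorial ⁻¹' (blockValue '' blockPairs (Iic K ∪ {k | k + 1 ∈ T})) ∩
      Iio N).ncard ≤ (K + 1) ^ 2 + 3 + 4 * Nat.sqrt N := by
  have hfin := (finite_blockPairs (I := Iic K) subset_rfl).union
    (finite_blockPairs (I := {k | k + 1 ∈ T} ∩ Iic (2 * Nat.sqrt N + 1)) inter_subset_right)
  calc _ ≤ (blockPairs ((Iic K ∪ {k | k + 1 ∈ T}) ∩ Iic (2 * Nat.sqrt N + 1))).ncard :=
        ncard_preimage_dSeq_inter_Iio_le _ N
    _ ≤ (blockPairs (Iic K) ∪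
          blockPairs ({k | k + 1 ∈ T} ∩ Iic (2 * Nat.sqrt N + 1))).ncard := by
        refine ncard_le_ncard ?_ hfin
        rw [union_inter_distrib_right, blockPairs_union]
        exact union_subset_union_left _ (blockPairs_mono inter_subset_left)
    _ ≤ (K + 1) ^ 2 + (2 * (2 * Nat.sqrt N + 1) + 1) :=
        (ncard_union_le _ _).trans
          (Nat.add_le_add (ncard_blockPairs_le subset_rfl) (ncard_blockPairs_pred_le hT _))
    _ = (K + 1) ^ 2 + 3 + 4 * Nat.sqrt N := by ring

theorem factorialSeries_mem_statChar {T : Set ℕ} (hT : IsLacunary T) :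
    (factorialSeries T : AddCircle (1 : ℝ)) ∈ statChar (fun n => (dSeq Nat.factorial n : ℤ)) := by
  intro ε hε
  obtain ⟨K, hK⟩ : ∃ K : ℕ, 2 / ((K : ℝ) + 2) < ε := by
    obtain ⟨K, hK⟩ := exists_nat_gt (2 / ε)
    refine ⟨K, (div_lt_iff₀ (by positivity)).mpr ?_⟩
    rw [div_lt_iff₀ hε] at hK
    nlinarith
  refine hasDensity_zero_of_ncard_le_sqrt ((K + 1) ^ 2 + 3) 4 fun N => ?_
  refine le_trans ?_ (ncard_preimage_dSeq_inter_Iio_le_sqrt hT K N)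
  exact ncard_le_ncard
    (inter_subset_inter_left _ (setOf_le_norm_zsmul_factorialSeries_subset hK))
    ((finite_Iio N).inter_of_right _)

lemma image_two_pow_subset_Ioi (S : Set ℕ) : (fun i => 2 ^ (i + 2)) '' S ⊆ Ioi 2 := by
  rintro _ ⟨i, -, rfl⟩
  exact Nat.lt_two_pow_self.trans_le (Nat.pow_le_pow_right two_pos (by omega))

lemma isLacunary_image_two_pow (S : Set ℕ) : IsLacunary ((fun i => 2 ^ (i + 2)) '' S) := by
  rintro _ ⟨i, -, rfl⟩ _ ⟨j, -, rfl⟩ hij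
  rw [← pow_succ']
  exact Nat.pow_le_pow_right two_pos
    (by have := (Nat.pow_lt_pow_iff_right one_lt_two).mp hij; omega)

/-- for `a n = n!`, the subgroup `t^s_{(d n)}(𝕋)` has cardinality continuum. -/
theorem statChar_factorial_continuum :
    Cardinal.mk ↥(statChar (fun n => (dSeq Nat.factorial n : ℤ))) = Cardinal.continuum := by
  refine le_antisymm ?_ ?_
  · calc Cardinal.mk ↥(statChar (fun n => (dSeq Nat.factorial n : ℤ)))
        ≤ Cardinal.mk (AddCircle (1 : ℝ)) := Cardinal.mk_set_le _
      _ ≤ Cardinal.mk ℝ := Cardinal.mk_le_of_surjective QuotientAddGroup.mk_surjective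
      _ = Cardinal.continuum := Cardinal.mk_real
  · have hinj : Function.Injective fun S : Set ℕ =>
        (⟨factorialSeries ((fun i => 2 ^ (i + 2)) '' S),
          factorialSeries_mem_statChar (isLacunary_image_two_pow S)⟩ :
            ↥(statChar (fun n => (dSeq Nat.factorial n : ℤ)))) := fun S S' h =>
      image_injective.mpr ((Nat.pow_right_injective le_rfl).comp (add_left_injective 2))
        (coe_factorialSeries_injOn (image_two_pow_subset_Ioi S) (image_two_pow_subset_Ioi S')
          (congrArg Subtype.val h))
    calc Cardinal.continuum = Cardinal.mk (Set ℕ) := by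
          rw [Cardinal.mk_set, Cardinal.mk_nat, Cardinal.two_power_aleph0]
      _ ≤ _ := Cardinal.mk_le_of_injective hinj
end
end

section
/- Let (a_n) be an arithmetic sequence whose ratios satisfy b_{n+1} ≥ α(b_1 + b_2 + … + b_n) for all n, for some fixed α > 0. Then (a_n) is strongly non density lifting invariant (strongly non dli). -/
open Filter Topology Set

noncomputable section

/-- if `b (n+1) ≥ α (b 1 + ⋯ + b n)` for some `α > 0`, then `(a n)` is
strongly non dli. -/
theorem stronglyNonDli_of_ratio_growth (a : ℕ → ℕ) (ha : IsArithSeq a) (α : ℝ) (hα : 0 < α)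
    (h : ∀ n : ℕ, α * ∑ i ∈ Finset.Icc 1 n, (ratios a i : ℝ) ≤ (ratios a (n + 1) : ℝ)) :
    StronglyNonDli a := by
  obtain ⟨ha0, hmono, hdvd⟩ := ha
  have hsm : StrictMono a := strictMono_nat_of_lt_succ hmono
  have hapos : ∀ n, 0 < a n := fun n => lt_of_lt_of_le (by rw [ha0]; omega : 0 < a 0) (hsm.monotone (Nat.zero_le n))
  have hb : ∀ k, 2 ≤ ratios a (k + 1) := by
    intro k
    obtain ⟨q, hq⟩ := hdvd k
    have hr : ratios a (k + 1) = q := by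
      simp [ratios, hq, Nat.mul_div_cancel_left _ (hapos k)]
    have hlt := hmono k
    rw [hq] at hlt
    have : 1 < q := lt_of_mul_lt_mul_left (by omega : a k * 1 < a k * q) (Nat.zero_le _)
    omega
  have hnsucc : ∀ k, nseq a (k + 1) = nseq a k + (ratios a (k + 1) - 1) := fun k => rfl
  have hnpos : ∀ k, k + 1 ≤ nseq a k := by
    intro k; induction k with
    | zero => simp [nseq]
    | succ k ih => have := hb k; rw [hnsucc]; omega
  have hsum : ∀ k, nseq a k + k = 1 + ∑ i ∈ Finset.Icc 1 k, ratios a i := by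
    intro k; induction k with
    | zero => simp [nseq]
    | succ k ih =>
      rw [Finset.sum_Icc_succ_top (by omega : 1 ≤ k + 1), hnsucc]
      have := hb k
      omega
  intro A hA
  set f : ℕ → ℝ := fun n : ℕ => ((liftSet a A ∩ Set.Iio n).ncard : ℝ) / n with hf
  set c : ℝ := α / (2 * (1 + α)) with hc
  have hcpos : 0 < c := by positivity
  have hbdd : IsBoundedUnder (· ≤ ·) atTop f := by
    refine isBoundedUnder_of ⟨1, fun n => ?_⟩
    rcases Nat.eq_zero_or_pos n with rfl | hn
    · simp [hf]
    · have h1 : (liftSet a A ∩ Set.Iio n).ncard ≤ n := by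
        have h2 := Set.ncard_le_ncard (Set.inter_subset_right (s := liftSet a A) (t := Set.Iio n)) (Set.finite_Iio n)
        rwa [show (Set.Iio n).ncard = n by
          rw [← Finset.coe_Iio, Set.ncard_coe_finset, Nat.card_Iio]] at h2
      rw [hf, div_le_one (by exact_mod_cast hn)]
      exact_mod_cast h1
  have hfreq : ∃ᶠ n in atTop, c ≤ f n := by
    rw [Filter.frequently_atTop]
    intro N
    obtain ⟨k, hkA, hkN⟩ : ∃ k ∈ A, N < k := by
      obtain ⟨k, hk⟩ := (hA.diff (Set.finite_Iic N)).nonempty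
      exact ⟨k, hk.1, by simpa using hk.2⟩
    obtain ⟨j, rfl⟩ : ∃ j, k = j + 1 := ⟨k - 1, by omega⟩
    refine ⟨nseq a (j + 1), by have := hnpos (j + 1); omega, ?_⟩
    set b : ℕ := ratios a (j + 1) with hbdef
    have hb2 : 2 ≤ b := hb j
    have hsub : Set.Icc (nseq a j) (nseq a (j + 1) - 1) ⊆
        liftSet a A ∩ Set.Iio (nseq a (j + 1)) := by
      intro x hx
      refine ⟨Set.mem_biUnion hkA (by simpa using hx), ?_⟩
      have h1 := hx.2
      have h2 := hnpos (j + 1)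
      exact Set.mem_Iio.mpr (by omega)
    have hcard1 : (Set.Icc (nseq a j) (nseq a (j + 1) - 1)).ncard = b - 1 := by
      rw [← Finset.coe_Icc, Set.ncard_coe_finset, Nat.card_Icc]
      have := hnsucc j
      have := hnpos j
      omega
    have hcard : b - 1 ≤ (liftSet a A ∩ Set.Iio (nseq a (j + 1))).ncard := by
      rw [← hcard1]
      exact Set.ncard_le_ncard hsub ((Set.finite_Iio _).subset Set.inter_subset_right)
    -- real estimates
    have hbR : (2 : ℝ) ≤ (b : ℝ) := by exact_mod_cast hb2
    have hmR : α * (nseq a (j + 1) : ℝ) ≤ (b : ℝ) + α * b := by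
      have hs := hsum (j + 1)
      have hsR : (nseq a (j + 1) : ℝ) + (j + 1 : ℕ) =
          1 + ∑ i ∈ Finset.Icc 1 (j + 1), (ratios a i : ℝ) := by
        exact_mod_cast hs
      have hsplit : ∑ i ∈ Finset.Icc 1 (j + 1), (ratios a i : ℝ) =
          (∑ i ∈ Finset.Icc 1 j, (ratios a i : ℝ)) + (b : ℝ) := by
        rw [Finset.sum_Icc_succ_top (by omega : 1 ≤ j + 1)]
      have hj := h j
      have hmle : (nseq a (j + 1) : ℝ) ≤
          (∑ i ∈ Finset.Icc 1 j, (ratios a i : ℝ)) + (b : ℝ) := by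
        rw [← hsplit]
        have : (1 : ℝ) ≤ ((j + 1 : ℕ) : ℝ) := by exact_mod_cast Nat.succ_le_succ (Nat.zero_le j)
        linarith
      nlinarith [mul_le_mul_of_nonneg_left hmle hα.le]
    have hnR : (0 : ℝ) < (nseq a (j + 1) : ℝ) := by
      have := hnpos (j + 1); exact_mod_cast (by omega : 0 < nseq a (j + 1))
    have hstep : c ≤ ((b : ℝ) - 1) / (nseq a (j + 1) : ℝ) := by
      rw [hc, le_div_iff₀ hnR]
      rw [div_mul_eq_mul_div, div_le_iff₀ (by positivity : (0:ℝ) < 2 * (1 + α))]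
      nlinarith [mul_le_mul_of_nonneg_left hbR hα.le]
    have hnum : ((b : ℝ) - 1) ≤ ((liftSet a A ∩ Set.Iio (nseq a (j + 1))).ncard : ℝ) := by
      have : ((b - 1 : ℕ) : ℝ) = (b : ℝ) - 1 := by
        have : 1 ≤ b := by omega
        push_cast [Nat.cast_sub this]
        ring
      rw [← this]
      exact_mod_cast hcard
    calc c ≤ ((b : ℝ) - 1) / (nseq a (j + 1) : ℝ) := hstep
      _ ≤ f (nseq a (j + 1)) := by
          rw [hf]
          exact div_le_div_of_nonneg_right hnum hnR.le
  have hle : c ≤ upperDensity (liftSet a A) :=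
    le_limsup_of_frequently_le hfreq hbdd
  linarith
end
end
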